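/- arXiv:1404.4742 — 2 statements merged into one kernel-verified Lean document; each statement's English description precedes it below -/
import Mathlib

section
/- Let Γ be a finite-dimensional algebra over a field K that is 1-Gorenstein (i.e. the injective dimensions of Γ as a left module over itself and as a right module over itself are both at most 1). Then a finitely generated Γ-module M is Gorenstein projective if and only if M is torsionless, i.e. M embeds into a finitely generated projective Γ-module. -/
open CategoryTheory

/-- The injective dimension of the `R`-module `M` is at most `n`:
there is an injective coresolution `0 → M → I⁰ → I¹ → ⋯ → Iⁿ → 0`. -/
def injDimLE (R : Type) [Ring R] (M : Type) [AddCommGroup M] [Module R M] (n : ℕ) : Prop :=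
  ∃ (I : ℕ → ModuleCat.{0} R) (f : M →ₗ[R] I 0) (d : ∀ k, I k ⟶ I (k + 1)),
    (∀ k, Module.Injective R (I k)) ∧
    Function.Injective f ∧
    LinearMap.range f = LinearMap.ker (d 0).hom ∧
    (∀ k, LinearMap.range (d k).hom = LinearMap.ker (d (k + 1)).hom) ∧
    (∀ k, n ≤ k → Subsingleton (I (k + 1)))

/-- `G` is a Gorenstein projective `Γ`-module: there is an exact complex
`⋯ → P⁻¹ → P⁰ → P¹ → ⋯` of finitely generated projective modules which stays exact
under `Hom_Γ(-,Γ)`, with `G ≅ Ker (P⁰ → P¹)`. -/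
def IsGorensteinProjective (Γ : Type) [Ring Γ] (G : Type) [AddCommGroup G] [Module Γ G] : Prop :=
  ∃ (P : ℤ → ModuleCat.{0} Γ) (d : ∀ i, P i ⟶ P (i + 1)),
    (∀ i, Module.Finite Γ (P i)) ∧
    (∀ i, Module.Projective Γ (P i)) ∧
    (∀ i, LinearMap.range (d i).hom = LinearMap.ker (d (i + 1)).hom) ∧
    (∀ (i : ℤ) (f : P (i + 1) →ₗ[Γ] Γ), f.comp (d i).hom = 0 →
      ∃ g : P (i + 1 + 1) →ₗ[Γ] Γ, g.comp (d (i + 1)).hom = f) ∧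
    Nonempty (G ≃ₗ[Γ] LinearMap.ker (d 0).hom)

/-- `M` is torsionless: it embeds into a finitely generated projective module. -/
def IsTorsionless (Γ : Type) [Ring Γ] (M : Type) [AddCommGroup M] [Module Γ M] : Prop :=
  ∃ (P : ModuleCat.{0} Γ), Module.Finite Γ P ∧ Module.Projective Γ P ∧
    ∃ f : M →ₗ[Γ] P, Function.Injective f

/-!
If `inj.dim Γ ≤ 1`, then `Ext¹(C, Γ) = 0` for every torsionless `C ⊆ Q`, `Q` projective, since
`Ext¹(C, Γ) ≅ Ext²(Q ⧸ C, Γ)`. The images in an exact complex of finitely generated projectives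
are torsionless, so `Hom(-, Γ)` keeps such a complex exact, and it suffices to build one through a
torsionless `M` by splicing sequences `0 → X → Γⁿ → Y → 0` of finitely generated torsionless
modules. Leftwards these are free presentations. Rightwards, `inj.dim Γᵒᵖ ≤ 1` makes `M → M**`
bijective, and `M` embeds into `Γᵐ` through the dual of a presentation of `M*`, with cokernel
inside some `Γʳ`.

Right modules are `Γᵐᵒᵖ`-modules; the dual `N →ₗ[R] R` is one, and functionals on it take values
in `R`, on which `Rᵐᵒᵖ` acts by right multiplication.
-/

open Function

section Torsionless

variable {R : Type} [Ring R] {M N P : Type} [AddCommGroup M] [Module R M]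
  [AddCommGroup N] [Module R N] [AddCommGroup P] [Module R P]

theorem IsTorsionless.of_injective (h : IsTorsionless R N) {f : M →ₗ[R] N} (hf : Injective f) :
    IsTorsionless R M :=
  let ⟨Q, hfin, hproj, g, hg⟩ := h
  ⟨Q, hfin, hproj, g ∘ₗ f, hg.comp hf⟩

theorem isTorsionless_of_projective [Module.Finite R M] [Module.Projective R M] :
    IsTorsionless R M :=
  ⟨ModuleCat.of R M, ‹_›, ‹_›, LinearMap.id, injective_id⟩

theorem IsTorsionless.quotient_range (hP : IsTorsionless R P) {f : M →ₗ[R] N}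
    {g : N →ₗ[R] P} (hfg : Exact f g) : IsTorsionless R (N ⧸ LinearMap.range f) :=
  hP.of_injective (LinearMap.injective_range_liftQ_of_exact hfg)

theorem IsTorsionless.exists_apply_ne_zero (h : IsTorsionless R M) {x : M} (hx : x ≠ 0) :
    ∃ f : M →ₗ[R] R, f x ≠ 0 := by
  obtain ⟨Q, -, hproj, j, hj⟩ := h
  obtain ⟨f, hf⟩ := Module.Projective.exists_dual_ne_zero R ((map_ne_zero_iff j hj).2 hx)
  exact ⟨f ∘ₗ j, hf⟩

theorem IsTorsionless.exists_comp_eq [Module.Injective R P] (hM : IsTorsionless R M)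
    {d : N →ₗ[R] P} (hd : Surjective d) (χ : M →ₗ[R] P) : ∃ θ : M →ₗ[R] N, d ∘ₗ θ = χ := by
  obtain ⟨Q, -, hproj, j, hj⟩ := hM
  obtain ⟨χ', hχ'⟩ := Module.Injective.out j hj χ
  obtain ⟨θ, hθ⟩ := Module.projective_lifting_property d χ' hd
  exact ⟨θ ∘ₗ j, by rw [← LinearMap.comp_assoc, hθ]; exact LinearMap.ext hχ'⟩

end Torsionless

section Factorization

variable {R : Type} [Ring R] {M N P Q : Type} [AddCommGroup M] [Module R M]
  [AddCommGroup N] [Module R N] [AddCommGroup P] [Module R P] [AddCommGroup Q] [Module R Q]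
  {f : M →ₗ[R] N} {g : N →ₗ[R] P}

theorem Function.Exact.exists_comp_eq_of_injective (hfg : Exact f g) (hf : Injective f)
    (u : Q →ₗ[R] N) (hu : g ∘ₗ u = 0) : ∃ v : Q →ₗ[R] M, f ∘ₗ v = u := by
  have hmem (q : Q) : u q ∈ LinearMap.range f := (hfg (u q)).1 (LinearMap.congr_fun hu q)
  refine ⟨(LinearEquiv.ofInjective f hf).symm.toLinearMap ∘ₗ u.codRestrict _ hmem,
    LinearMap.ext fun q ↦ ?_⟩
  simp

theorem Function.Exact.exists_comp_eq_of_surjective (hfg : Exact f g) (hg : Surjective g)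
    (u : N →ₗ[R] Q) (hu : u ∘ₗ f = 0) : ∃ v : P →ₗ[R] Q, v ∘ₗ g = u := by
  refine ⟨(LinearMap.range f).liftQ u (LinearMap.range_le_ker_iff.2 hu) ∘ₗ
    (hfg.linearEquivOfSurjective hg).symm.toLinearMap, LinearMap.ext fun n ↦ ?_⟩
  simp

end Factorization

section InjectiveDimensionOne

variable {R : Type} [Ring R] {E : Type} [AddCommGroup E] [Module R E]

theorem injDimLE.of_linearEquiv {E' : Type} [AddCommGroup E'] [Module R E'] {n : ℕ}
    (h : injDimLE R E n) (e : E' ≃ₗ[R] E) : injDimLE R E' n := by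
  obtain ⟨I, f, d, hI, hf, hfd, hd, hvan⟩ := h
  refine ⟨I, f ∘ₗ e.toLinearMap, d, hI, hf.comp e.injective, ?_, hd, hvan⟩
  rw [LinearMap.range_comp_of_range_eq_top _ e.range, hfd]

theorem injDimLE.exists_injective_shortExact (h : injDimLE R E 1) :
    ∃ (I₀ I₁ : ModuleCat.{0} R), Module.Injective R I₀ ∧ Module.Injective R I₁ ∧
      ∃ (f : E →ₗ[R] I₀) (d : I₀ →ₗ[R] I₁),
        Injective f ∧ Exact f d ∧ Surjective d := by
  obtain ⟨I, f, d, hI, hf, hfd, hd, hvan⟩ := h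
  have : Subsingleton (I (1 + 1)) := hvan 1 le_rfl
  refine ⟨I 0, I 1, hI 0, hI 1, f, (d 0).hom, hf, LinearMap.exact_iff.2 hfd.symm, ?_⟩
  rw [← LinearMap.range_eq_top, hd 0, LinearMap.ker_eq_top]
  exact Subsingleton.elim _ _

variable {M B : Type} [AddCommGroup M] [Module R M] [AddCommGroup B] [Module R B]

/-- With `0 → E → I₀ → I₁ → 0` injective, the obstruction to extending `φ` is a map
`B ⧸ A → I₁`, and maps from a torsionless module to `I₁` lift to `I₀`. -/
theorem exists_extend_of_injDimLE_one (hE : injDimLE R E 1) (A : Submodule R B)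
    (hq : IsTorsionless R (B ⧸ A)) (φ : A →ₗ[R] E) :
    ∃ ψ : B →ₗ[R] E, ψ ∘ₗ A.subtype = φ := by
  obtain ⟨I₀, I₁, _, _, f, d, hf, hfd, hd⟩ := hE.exists_injective_shortExact
  obtain ⟨ψ₀, hψ₀⟩ := Module.Injective.out A.subtype A.injective_subtype (f ∘ₗ φ)
  have hA : A ≤ LinearMap.ker (d ∘ₗ ψ₀) := fun a ha ↦ by
    rw [LinearMap.mem_ker, LinearMap.comp_apply,
      show ψ₀ a = f (φ ⟨a, ha⟩) from hψ₀ ⟨a, ha⟩]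
    exact hfd.apply_apply_eq_zero _
  obtain ⟨θ, hθ⟩ := hq.exists_comp_eq hd (A.liftQ (d ∘ₗ ψ₀) hA)
  have hcomp : d ∘ₗ (ψ₀ - θ ∘ₗ A.mkQ) = 0 := by
    ext b
    simp [← LinearMap.comp_apply d θ, hθ]
  obtain ⟨ψ, hψ⟩ := hfd.exists_comp_eq_of_injective hf _ hcomp
  refine ⟨ψ, LinearMap.ext fun a ↦ hf ?_⟩
  have hψa := LinearMap.congr_fun hψ a
  simp only [LinearMap.comp_apply, LinearMap.sub_apply, Submodule.mkQ_apply,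
    (Submodule.Quotient.mk_eq_zero _).2 a.2, map_zero, sub_zero] at hψa
  exact hψa.trans (hψ₀ a)

theorem exists_comp_eq_of_injDimLE_one (hE : injDimLE R E 1) (u : M →ₗ[R] B)
    (hq : IsTorsionless R (B ⧸ LinearMap.range u)) (f : M →ₗ[R] E)
    (hf : LinearMap.ker u ≤ LinearMap.ker f) : ∃ g : B →ₗ[R] E, g ∘ₗ u = f := by
  have hexact : Exact (LinearMap.ker u).subtype u.rangeRestrict := LinearMap.exact_iff.2 <| by
    rw [LinearMap.ker_rangeRestrict, Submodule.range_subtype]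
  obtain ⟨φ, hφ⟩ := hexact.exists_comp_eq_of_surjective u.surjective_rangeRestrict f <| by
    ext x
    exact hf x.2
  obtain ⟨g, hg⟩ := exists_extend_of_injDimLE_one hE _ hq φ
  exact ⟨g, by rw [← hφ, ← hg]; rfl⟩

end InjectiveDimensionOne

section GorensteinProjective

variable {R : Type} [Ring R]

theorem IsGorensteinProjective.isTorsionless {G : Type} [AddCommGroup G] [Module R G]
    (h : IsGorensteinProjective R G) : IsTorsionless R G :=
  let ⟨P, d, hfin, hproj, _, _, ⟨e⟩⟩ := h
  ⟨P 0, hfin 0, hproj 0, (LinearMap.ker (d 0).hom).subtype ∘ₗ e.toLinearMap,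
    (LinearMap.ker (d 0).hom).injective_subtype.comp e.injective⟩

theorem isGorensteinProjective_of_exact (hR : injDimLE R R 1) {G : Type} [AddCommGroup G]
    [Module R G] (P : ℤ → ModuleCat.{0} R) [∀ i, Module.Finite R (P i)]
    [∀ i, Module.Projective R (P i)] (d : ∀ i, P i ⟶ P (i + 1))
    (hd : ∀ i, Exact (d i).hom (d (i + 1)).hom) (e : G ≃ₗ[R] LinearMap.ker (d 0).hom) :
    IsGorensteinProjective R G := by
  refine ⟨P, d, inferInstance, inferInstance, fun i ↦ (hd i).linearMap_ker_eq.symm,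
    fun i f hf ↦ ?_, ⟨e⟩⟩
  have hq := (isTorsionless_of_projective (M := P (i + 1 + 1 + 1))).quotient_range (hd (i + 1))
  refine exists_comp_eq_of_injDimLE_one hR _ hq f ?_
  rw [(hd i).linearMap_ker_eq]
  exact LinearMap.range_le_ker_iff.2 hf

def IsFreeSyzygy (R : Type) [Ring R] (X Y : Type) [AddCommGroup X] [Module R X]
    [AddCommGroup Y] [Module R Y] : Prop :=
  ∃ (n : ℕ) (ι : X →ₗ[R] Fin n → R) (π : (Fin n → R) →ₗ[R] Y),
    Injective ι ∧ Exact ι π ∧ Surjective π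

theorem exists_int_chain {α : Type*} (r : α → α → Prop) (hfwd : ∀ x, ∃ y, r x y)
    (hbwd : ∀ y, ∃ x, r x y) (a : α) :
    ∃ Z : ℤ → α, Z 0 = a ∧ ∀ i, r (Z i) (Z (i + 1)) := by
  choose f hf using hfwd
  choose g hg using hbwd
  refine ⟨fun | .ofNat n => f^[n] a | .negSucc n => g^[n + 1] a, rfl, ?_⟩
  rintro (n | _ | n)
  · have h := hf (f^[n] a)
    rw [← iterate_succ_apply' f] at h
    exact h
  · exact hg a
  · have h := hg (g^[n + 1] a)
    rw [← iterate_succ_apply' g] at h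
    exact h

theorem isGorensteinProjective_of_isFreeSyzygy (hR : injDimLE R R 1)
    (Z : ℤ → ModuleCat.{0} R) (hZ : ∀ i, IsFreeSyzygy R (Z i) (Z (i + 1))) :
    IsGorensteinProjective R (Z 0) := by
  choose n ι π hι hexact hπ using hZ
  let P (i : ℤ) : ModuleCat.{0} R := ModuleCat.of R (Fin (n i) → R)
  let d (i : ℤ) : P i ⟶ P (i + 1) := ModuleCat.ofHom (ι (i + 1) ∘ₗ π i)
  have hd (i : ℤ) : Exact (d i).hom (d (i + 1)).hom :=
    (hπ i).comp_exact_iff_exact.2 ((hι (i + 1 + 1)).comp_exact_iff_exact.2 (hexact (i + 1)))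
  have hker : LinearMap.range (ι 0) = LinearMap.ker (d 0).hom := by
    rw [ModuleCat.hom_ofHom, LinearMap.ker_comp_of_ker_eq_bot _ (LinearMap.ker_eq_bot.2 (hι _)),
      (hexact 0).linearMap_ker_eq]
  exact isGorensteinProjective_of_exact hR P d hd
    ((LinearEquiv.ofInjective _ (hι 0)).trans (LinearEquiv.ofEq _ _ hker))

end GorensteinProjective

section Duality

variable {R : Type} [Ring R]

instance Module.Finite.self_mulOpposite : Module.Finite Rᵐᵒᵖ R :=
  Module.Finite.equiv (MulOpposite.opLinearEquiv Rᵐᵒᵖ).symm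

instance Module.Free.self_mulOpposite : Module.Free Rᵐᵒᵖ R :=
  Module.Free.of_equiv (MulOpposite.opLinearEquiv Rᵐᵒᵖ).symm

instance Module.Free.dual_pi (n : ℕ) : Module.Free Rᵐᵒᵖ ((Fin n → R) →ₗ[R] R) :=
  Module.Free.of_equiv (LinearEquiv.piRing R R (Fin n) Rᵐᵒᵖ).symm

theorem Function.Exact.lcomp_of_surjective {S : Type} [Ring S] {M₁ M₂ M₃ E : Type}
    [AddCommGroup M₁] [Module R M₁] [AddCommGroup M₂] [Module R M₂] [AddCommGroup M₃]
    [Module R M₃] [AddCommGroup E] [Module R E] [Module S E] [SMulCommClass R S E]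
    {f : M₁ →ₗ[R] M₂} {g : M₂ →ₗ[R] M₃} (hfg : Exact f g) (hg : Surjective g) :
    Exact (LinearMap.lcomp S E g) (LinearMap.lcomp S E f) := by
  intro h
  refine ⟨fun hh ↦ hfg.exists_comp_eq_of_surjective hg h hh, ?_⟩
  rintro ⟨v, rfl⟩
  change (v ∘ₗ g) ∘ₗ f = 0
  rw [LinearMap.comp_assoc, hfg.linearMap_comp_eq_zero, LinearMap.comp_zero]

theorem exists_fin_presentation (R : Type) [Ring R] [IsNoetherianRing R] (N : Type)
    [AddCommGroup N] [Module R N] [Module.Finite R N] :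
    ∃ (m n : ℕ) (p : (Fin n → R) →ₗ[R] Fin m → R) (q : (Fin m → R) →ₗ[R] N),
      Exact p q ∧ Surjective q := by
  obtain ⟨m, q, hq⟩ := Module.Finite.exists_fin' R N
  obtain ⟨n, s, hs⟩ := Submodule.fg_iff_exists_fin_generating_family.1
    (IsNoetherian.noetherian (LinearMap.ker q))
  refine ⟨m, n, Fintype.linearCombination R s, q, LinearMap.exact_iff.2 ?_, hq⟩
  rw [Fintype.range_linearCombination, hs]

variable (R) in
def doubleDualEval (N : Type) [AddCommGroup N] [Module R N] :
    N →ₗ[R] (N →ₗ[R] R) →ₗ[Rᵐᵒᵖ] R :=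
  LinearMap.flip LinearMap.id

variable {N : Type} [AddCommGroup N] [Module R N]

@[simp]
theorem doubleDualEval_apply (x : N) (f : N →ₗ[R] R) : doubleDualEval R N x f = f x := rfl

theorem IsTorsionless.doubleDualEval_injective (hN : IsTorsionless R N) :
    Injective (doubleDualEval R N) := by
  refine (injective_iff_map_eq_zero _).2 fun x hx ↦ ?_
  by_contra hx0
  obtain ⟨f, hf⟩ := hN.exists_apply_ne_zero hx0
  exact hf (LinearMap.congr_fun hx f)

theorem doubleDualEval_surjective_pi (n : ℕ) : Surjective (doubleDualEval R (Fin n → R)) := by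
  intro φ
  refine ⟨fun i ↦ φ (LinearMap.proj i), LinearMap.ext fun g ↦ ?_⟩
  have hg : g = ∑ i, MulOpposite.op (g (Pi.single i 1)) • LinearMap.proj i := by
    ext i
    simp [Pi.single_apply]
  rw [hg]
  simp [MulOpposite.smul_eq_mul_unop]

/-- Dualizing a presentation `Rⁿ → Rᵐ → N → 0` gives `0 → N* → (Rᵐ)* → (Rⁿ)*`, so `N*` is a
submodule of `(Rᵐ)*` with torsionless quotient: functionals on `N*` extend to `(Rᵐ)*`, where
they are evaluations. -/
theorem doubleDualEval_surjective [IsNoetherianRing R] (hR : injDimLE Rᵐᵒᵖ R 1)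
    [Module.Finite R N] : Surjective (doubleDualEval R N) := by
  obtain ⟨m, n, p, q, hpq, hq⟩ := exists_fin_presentation R N
  have hdual := hpq.lcomp_of_surjective (S := Rᵐᵒᵖ) (E := R) hq
  intro φ
  obtain ⟨Ψ, hΨ⟩ := exists_comp_eq_of_injDimLE_one hR _
    (isTorsionless_of_projective.quotient_range hdual) φ <| by
      rw [LinearMap.ker_eq_bot.2 (LinearMap.lcomp_injective_of_surjective q hq)]
      exact bot_le
  obtain ⟨x, rfl⟩ := doubleDualEval_surjective_pi m Ψ
  exact ⟨q x, by rw [← hΨ]; rfl⟩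

theorem Module.Finite.dual_of_isNoetherianRing [IsNoetherianRing Rᵐᵒᵖ] [Module.Finite R N] :
    Module.Finite Rᵐᵒᵖ (N →ₗ[R] R) := by
  obtain ⟨m, q, hq⟩ := Module.Finite.exists_fin' R N
  have := isNoetherian_of_isNoetherianRing_of_finite Rᵐᵒᵖ ((Fin m → R) →ₗ[R] R)
  exact Module.Finite.of_injective _
    (LinearMap.lcomp_injective_of_surjective (S := Rᵐᵒᵖ) (N := R) q hq)

/-- `j` is `N ≅ N** ↪ (Rᵐᵒᵖᵐ)* ≅ Rᵐ` for a presentation `Rᵐᵒᵖʳ → Rᵐᵒᵖᵐ → N* → 0`; its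
cokernel embeds into `(Rᵐᵒᵖʳ)* ≅ Rʳ`. -/
theorem IsTorsionless.exists_injective_isTorsionless_quotient [IsNoetherianRing R]
    [IsNoetherianRing Rᵐᵒᵖ] (hR : injDimLE Rᵐᵒᵖ R 1) [Module.Finite R N]
    (hN : IsTorsionless R N) :
    ∃ (m : ℕ) (j : N →ₗ[R] Fin m → R), Injective j ∧
      IsTorsionless R ((Fin m → R) ⧸ LinearMap.range j) := by
  have := Module.Finite.dual_of_isNoetherianRing (R := R) (N := N)
  obtain ⟨m, r, p, q, hpq, hq⟩ := exists_fin_presentation Rᵐᵒᵖ (N →ₗ[R] R)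
  have hdual := hpq.lcomp_of_surjective (S := R) (E := R) hq
  let eₘ := LinearEquiv.piRing Rᵐᵒᵖ R (Fin m) R
  let eᵣ := LinearEquiv.piRing Rᵐᵒᵖ R (Fin r) R
  let j := eₘ.toLinearMap ∘ₗ LinearMap.lcomp R R q ∘ₗ doubleDualEval R N
  have hexact : Exact j (eᵣ.toLinearMap ∘ₗ LinearMap.lcomp R R p ∘ₗ eₘ.symm.toLinearMap) :=
    eᵣ.postcomp_exact_iff_exact.2 <| (LinearEquiv.conj_exact_iff_exact _ _ eₘ).2 <|
      (doubleDualEval_surjective hR).comp_exact_iff_exact.2 hdual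
  have hj : Injective j := eₘ.injective.comp <|
    (LinearMap.lcomp_injective_of_surjective (S := R) (N := R) q hq).comp
      hN.doubleDualEval_injective
  exact ⟨m, j, hj, isTorsionless_of_projective.quotient_range hexact⟩

end Duality

theorem IsTorsionless.isGorensteinProjective {R : Type} [Ring R] [IsNoetherianRing R]
    [IsNoetherianRing Rᵐᵒᵖ] (hleft : injDimLE R R 1) (hright : injDimLE Rᵐᵒᵖ Rᵐᵒᵖ 1)
    {M : Type} [AddCommGroup M] [Module R M] [Module.Finite R M] (hM : IsTorsionless R M) :
    IsGorensteinProjective R M := by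
  let α := {X : ModuleCat.{0} R // Module.Finite R X ∧ IsTorsionless R X}
  have hfwd (X : α) : ∃ Y : α, IsFreeSyzygy R X.1 Y.1 := by
    obtain ⟨X, _, hX⟩ := X
    obtain ⟨m, j, hj, hq⟩ := hX.exists_injective_isTorsionless_quotient
      (hright.of_linearEquiv (MulOpposite.opLinearEquiv Rᵐᵒᵖ))
    exact ⟨⟨ModuleCat.of R (_ ⧸ LinearMap.range j), inferInstance, hq⟩,
      m, j, Submodule.mkQ _, hj, LinearMap.exact_map_mkQ_range j, Submodule.mkQ_surjective _⟩
  have hbwd (Y : α) : ∃ X : α, IsFreeSyzygy R X.1 Y.1 := by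
    obtain ⟨Y, _, -⟩ := Y
    obtain ⟨n, π, hπ⟩ := Module.Finite.exists_fin' R Y
    exact ⟨⟨ModuleCat.of R (LinearMap.ker π), inferInstance,
      isTorsionless_of_projective.of_injective (LinearMap.ker π).injective_subtype⟩,
      n, _, π, (LinearMap.ker π).injective_subtype, LinearMap.exact_subtype_ker_map π, hπ⟩
  obtain ⟨Z, hZ0, hZ⟩ := exists_int_chain _ hfwd hbwd ⟨ModuleCat.of R M, ‹_›, hM⟩
  have hGP := isGorensteinProjective_of_isFreeSyzygy hleft (fun i ↦ (Z i).1) hZ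
  rwa [hZ0] at hGP

/-- For a `1`-Gorenstein finite-dimensional algebra `Γ`, a finitely generated module is
Gorenstein projective iff it is torsionless. -/
theorem gorensteinProjective_iff_torsionless_of_oneGorenstein
    (K Γ : Type) [Field K] [Ring Γ] [Algebra K Γ] [FiniteDimensional K Γ]
    (hleft : injDimLE Γ Γ 1) (hright : injDimLE Γᵐᵒᵖ Γᵐᵒᵖ 1)
    (M : Type) [AddCommGroup M] [Module Γ M] [Module.Finite Γ M] :
    IsGorensteinProjective Γ M ↔ IsTorsionless Γ M := by
  refine ⟨IsGorensteinProjective.isTorsionless, fun hM ↦ ?_⟩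
  have : IsNoetherianRing Γ := isNoetherian_of_tower K inferInstance
  have : IsNoetherianRing Γᵐᵒᵖ := isNoetherian_of_tower K inferInstance
  exact hM.isGorensteinProjective hleft hright
end

section
/- Let Λ be a d-Gorenstein finite-dimensional algebra. Then a finitely generated Λ-module G is Gorenstein projective if and only if there exists an exact sequence 0 → G → P^0 → P^1 → P^2 → ··· with each P^i finitely generated projective. -/
open CategoryTheory

/-!
Since `Λ` is Noetherian, `G ≅ ker (P⁰ → P¹)` has a resolution by finitely generated free
modules. Splicing it onto the coresolution gives an exact complex `P` of finitely generated
projectives with `G` as a kernel, so only its total acyclicity needs proof.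
For that it suffices that `Hom(P, X)` is exact for every `X` of finite injective dimension, which
follows by induction on the injective dimension: it is clear for injective `X`, and a short exact
sequence `0 → X → I → X' → 0` with `I` injective shifts it from `X'` to `X`, using that the `P i`
are projective. Take `X = Λ`.
-/

open CategoryTheory LinearMap

universe u

section Factorization

variable {R : Type u} [Ring R] {A B : Type*} [AddCommGroup A] [Module R A]
  [AddCommGroup B] [Module R B]

theorem Module.Injective.exists_comp_eq_of_ker_le {X : Type u} [AddCommGroup X] [Module R X]
    [Module.Injective R X] (δ : A →ₗ[R] B) (f : A →ₗ[R] X) (h : ker δ ≤ ker f) :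
    ∃ g : B →ₗ[R] X, g ∘ₗ δ = f := by
  obtain ⟨g, hg⟩ := Module.Injective.extension_property R X _ _ ((ker δ).liftQ δ le_rfl)
    (ker_eq_bot.mp ((ker δ).ker_liftQ_eq_bot _ _ le_rfl)) ((ker δ).liftQ f h)
  exact ⟨g, by ext a; exact congr($hg (Submodule.Quotient.mk a))⟩

theorem LinearMap.exists_comp_eq_of_range_le {X : Type*} [AddCommGroup X] [Module R X]
    {ι : X →ₗ[R] B} (hι : Function.Injective ι) {k : A →ₗ[R] B} (h : range k ≤ range ι) :
    ∃ g : A →ₗ[R] X, ι ∘ₗ g = k :=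
  ⟨(LinearEquiv.ofInjective ι hι).symm.toLinearMap ∘ₗ k.codRestrict _ (fun a => h ⟨a, rfl⟩), by
    ext a
    simp⟩

end Factorization

section InjectiveDimension

variable {R : Type} [Ring R] {M : Type} [AddCommGroup M] [Module R M]

theorem Module.Injective.of_injDimLE_zero (h : injDimLE R M 0) : Module.Injective R M := by
  obtain ⟨I, ι, dI, hinj, hι, h0, -, hsub⟩ := h
  have : Subsingleton (I 1) := hsub 0 le_rfl
  have hιsurj : Function.Surjective ι := by
    rw [← range_eq_top, h0, ker_eq_top]
    exact Subsingleton.elim _ _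
  exact ((Module.Baer.of_injective (hinj 0)).of_equiv
    (LinearEquiv.ofBijective ι ⟨hι, hιsurj⟩).symm).injective

theorem injDimLE.exists_shortExact {n : ℕ} (h : injDimLE R M (n + 1)) :
    ∃ (I N : ModuleCat.{0} R) (ι : M →ₗ[R] I) (π : I →ₗ[R] N), Module.Injective R I ∧
      Function.Injective ι ∧ Function.Exact ι π ∧ Function.Surjective π ∧ injDimLE R N n := by
  obtain ⟨I, ι, dI, hinj, hι, h0, hexI, hsub⟩ := h
  have hmem (x : I 0) : (dI 0).hom x ∈ ker (dI 1).hom := hexI 0 ▸ mem_range_self _ x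
  refine ⟨I 0, ModuleCat.of R (ker (dI 1).hom), ι, (dI 0).hom.codRestrict _ hmem, hinj 0, hι,
    exact_iff.mpr (by rw [ker_codRestrict, h0]), ?_,
    ⟨fun k => I (k + 1), (ker (dI 1).hom).subtype, fun k => dI (k + 1), fun k => hinj _,
      Submodule.injective_subtype _, Submodule.range_subtype _, fun k => hexI (k + 1),
      fun k hk => hsub (k + 1) (by omega)⟩⟩
  rintro ⟨y, hy⟩
  rw [← hexI 0] at hy
  obtain ⟨x, rfl⟩ := hy
  exact ⟨x, rfl⟩

end InjectiveDimension

section HomExact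

variable {Λ : Type} [Ring Λ] (P : ℤ → ModuleCat.{0} Λ) (δ : ∀ i, P i ⟶ P (i + 1))

/-- `Hom(P, X)` is exact at `Hom(P (i + 1), X)`. -/
def HomExactAt (X : Type) [AddCommGroup X] [Module Λ X] (i : ℤ) : Prop :=
  ∀ f : P (i + 1) →ₗ[Λ] X, f ∘ₗ (δ i).hom = 0 →
    ∃ g : P (i + 1 + 1) →ₗ[Λ] X, g ∘ₗ (δ (i + 1)).hom = f

variable {P δ}

theorem homExactAt_of_injective (X : Type) [AddCommGroup X] [Module Λ X] [Module.Injective Λ X]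
    {i : ℤ} (hex : range (δ i).hom = ker (δ (i + 1)).hom) : HomExactAt P δ X i :=
  fun f hf => Module.Injective.exists_comp_eq_of_ker_le _ f (hex ▸ range_le_ker_iff.mpr hf)

theorem HomExactAt.of_shortExact {X I X' : Type} [AddCommGroup X] [Module Λ X]
    [AddCommGroup I] [Module Λ I] [Module.Injective Λ I] [AddCommGroup X'] [Module Λ X']
    {ι : X →ₗ[Λ] I} {π : I →ₗ[Λ] X'} (hι : Function.Injective ι) (hιπ : Function.Exact ι π)
    (hπ : Function.Surjective π) {i : ℤ} (hex : range (δ i).hom = ker (δ (i + 1)).hom)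
    (hδδ : (δ (i + 1 + 1)).hom ∘ₗ (δ (i + 1)).hom = 0)
    (hproj : Module.Projective Λ (P (i + 1 + 1 + 1))) (h' : HomExactAt P δ X' (i + 1)) :
    HomExactAt P δ X i := by
  intro f hf
  obtain ⟨h, hh⟩ := homExactAt_of_injective I hex (ι ∘ₗ f) (by rw [comp_assoc, hf, comp_zero])
  obtain ⟨v, hv⟩ := h' (π ∘ₗ h) (by
    rw [comp_assoc, hh, ← comp_assoc, hιπ.linearMap_comp_eq_zero, zero_comp])
  obtain ⟨v', hv'⟩ := Module.projective_lifting_property π v hπ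
  -- `h - v' ∘ δ` still extends `ι ∘ f`, and now lands in `ker π = range ι`
  obtain ⟨g, hg⟩ := exists_comp_eq_of_range_le hι (k := h - v' ∘ₗ (δ (i + 1 + 1)).hom) (by
    rw [← hιπ.linearMap_ker_eq, range_le_ker_iff, comp_sub, ← comp_assoc, hv', hv, sub_self])
  refine ⟨g, (cancel_left hι).mp ?_⟩
  rw [← comp_assoc, hg, sub_comp, comp_assoc, hδδ, comp_zero, sub_zero, hh]

theorem homExactAt_of_injDimLE (hproj : ∀ i, Module.Projective Λ (P i))
    (hex : ∀ i, range (δ i).hom = ker (δ (i + 1)).hom) {X : Type} [AddCommGroup X] [Module Λ X]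
    {e : ℕ} (hX : injDimLE Λ X e) (i : ℤ) : HomExactAt P δ X i := by
  induction e generalizing X i with
  | zero =>
    have := Module.Injective.of_injDimLE_zero hX
    exact homExactAt_of_injective X (hex i)
  | succ n ih =>
    obtain ⟨I, X', ι, π, hI, hι, hιπ, hπ, hX'⟩ := hX.exists_shortExact
    exact HomExactAt.of_shortExact hι hιπ hπ (hex i) (range_le_ker_iff.mp (hex _).le) (hproj _)
      (ih hX' _)

end HomExact

section FreeResolution

variable {Λ : Type} [Ring Λ] {M : Type} [AddCommGroup M] [Module Λ M]

noncomputable def coverRank (S : Submodule Λ M) [Module.Finite Λ S] : ℕ :=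
  (Module.Finite.exists_fin' Λ S).choose

noncomputable def cover (S : Submodule Λ M) [Module.Finite Λ S] :
    (Fin (coverRank S) → Λ) →ₗ[Λ] M :=
  S.subtype ∘ₗ (Module.Finite.exists_fin' Λ S).choose_spec.choose

theorem range_cover (S : Submodule Λ M) [Module.Finite Λ S] : range (cover S) = S :=
  (range_comp_of_range_eq_top S.subtype
    (range_eq_top.mpr (Module.Finite.exists_fin' Λ S).choose_spec.choose_spec)).trans
    S.range_subtype

variable [IsNoetherianRing Λ] [IsNoetherian Λ M]

noncomputable def syzygy (S : Submodule Λ M) : ℕ → Σ m : ℕ, Submodule Λ (Fin m → Λ)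
  | 0 => ⟨coverRank S, ker (cover S)⟩
  | n + 1 => ⟨coverRank (syzygy S n).2, ker (cover (syzygy S n).2)⟩

theorem Submodule.exists_finite_free_resolution (S : Submodule Λ M) :
    ∃ (Q : ℕ → ModuleCat.{0} Λ) (ε : Q 0 →ₗ[Λ] M) (σ : ∀ n, Q (n + 1) ⟶ Q n),
      (∀ n, Module.Free Λ (Q n)) ∧ (∀ n, Module.Finite Λ (Q n)) ∧ range ε = S ∧
      range (σ 0).hom = ker ε ∧ ∀ n, range (σ (n + 1)).hom = ker (σ n).hom :=
  ⟨fun n => ModuleCat.of Λ (Fin (syzygy S n).1 → Λ), cover S,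
    fun n => ModuleCat.ofHom (cover (syzygy S n).2), fun _ => inferInstance, fun _ => inferInstance,
    range_cover S, range_cover _, fun _ => range_cover _⟩

end FreeResolution

section Splice

variable {Λ : Type} [Ring Λ] (Q P : ℕ → ModuleCat.{0} Λ)

/-- The complex `⋯ → Q 1 → Q 0 → P 0 → P 1 → ⋯`, with `Q n` in degree `-(n + 1)`. -/
def spliceObj : ℤ → ModuleCat.{0} Λ
  | .ofNat n => P n
  | .negSucc n => Q n

variable {Q P}

def spliceMap (σ : ∀ n, Q (n + 1) ⟶ Q n) (ε : Q 0 ⟶ P 0) (δ : ∀ n, P n ⟶ P (n + 1)) :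
    ∀ i, spliceObj Q P i ⟶ spliceObj Q P (i + 1)
  | .ofNat n => δ n
  | .negSucc 0 => ε
  | .negSucc (n + 1) => σ n

theorem forall_spliceObj {p : ModuleCat.{0} Λ → Prop} (hQ : ∀ n, p (Q n)) (hP : ∀ n, p (P n)) :
    ∀ i, p (spliceObj Q P i)
  | .ofNat n => hP n
  | .negSucc n => hQ n

theorem range_spliceMap_eq_ker {σ : ∀ n, Q (n + 1) ⟶ Q n} {ε : Q 0 ⟶ P 0}
    {δ : ∀ n, P n ⟶ P (n + 1)} (hσ : ∀ n, range (σ (n + 1)).hom = ker (σ n).hom)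
    (hσε : range (σ 0).hom = ker ε.hom) (hεδ : range ε.hom = ker (δ 0).hom)
    (hδ : ∀ n, range (δ n).hom = ker (δ (n + 1)).hom) :
    ∀ i, range (spliceMap σ ε δ i).hom = ker (spliceMap σ ε δ (i + 1)).hom
  | .ofNat n => hδ n
  | .negSucc 0 => hεδ
  | .negSucc 1 => hσε
  | .negSucc (n + 2) => hσ n

end Splice

theorem gorensteinProjective_iff_coresolution_general
    (K Λ : Type) [Field K] [Ring Λ] [Algebra K Λ] [FiniteDimensional K Λ]
    (d : ℕ) (hleft : injDimLE Λ Λ d)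
    (G : Type) [AddCommGroup G] [Module Λ G] :
    IsGorensteinProjective Λ G ↔
      ∃ (P : ℕ → ModuleCat.{0} Λ) (f : G →ₗ[Λ] P 0) (δ : ∀ k, P k ⟶ P (k + 1)),
        (∀ k, Module.Finite Λ (P k)) ∧
        (∀ k, Module.Projective Λ (P k)) ∧
        Function.Injective f ∧
        LinearMap.range f = LinearMap.ker (δ 0).hom ∧
        (∀ k, LinearMap.range (δ k).hom = LinearMap.ker (δ (k + 1)).hom) := by
  constructor
  · rintro ⟨P, δ, hfin, hproj, hex, -, ⟨e⟩⟩
    refine ⟨fun k => P k, (ker (δ 0).hom).subtype ∘ₗ e.toLinearMap, fun k => δ k, fun k => hfin k,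
      fun k => hproj k, (Submodule.injective_subtype _).comp e.injective, ?_, fun k => hex k⟩
    rw [range_comp, e.range, Submodule.map_top, Submodule.range_subtype]
    rfl
  · rintro ⟨P, f, δ, hfin, hproj, hf, hfδ, hex⟩
    have := IsNoetherianRing.of_finite K Λ
    have := hfin 0
    obtain ⟨Q, ε, σ, hQfree, hQfin, hε, hσε, hσ⟩ := (ker (δ 0).hom).exists_finite_free_resolution
    have hexact := range_spliceMap_eq_ker (ε := ModuleCat.ofHom ε) hσ hσε hε hex
    have hprojective : ∀ i, Module.Projective Λ (spliceObj Q P i) :=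
      forall_spliceObj (p := fun X => Module.Projective Λ X) (fun _ => .of_free) hproj
    exact ⟨spliceObj Q P, spliceMap σ (ModuleCat.ofHom ε) δ,
      forall_spliceObj (p := fun X => Module.Finite Λ X) hQfin hfin,
      hprojective, hexact, fun i => homExactAt_of_injDimLE hprojective hexact hleft i,
      ⟨(LinearEquiv.ofInjective f hf).trans (LinearEquiv.ofEq _ _ hfδ)⟩⟩

/-- For a `d`-Gorenstein finite-dimensional algebra `Λ`, a finitely generated module `G` is
Gorenstein projective iff there is an exact sequence `0 → G → P⁰ → P¹ → ⋯` with all `Pⁱ`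
finitely generated projective. -/
theorem gorensteinProjective_iff_coresolution
    (K Λ : Type) [Field K] [Ring Λ] [Algebra K Λ] [FiniteDimensional K Λ]
    (d : ℕ) (hleft : injDimLE Λ Λ d) (hright : injDimLE Λᵐᵒᵖ Λᵐᵒᵖ d)
    (G : Type) [AddCommGroup G] [Module Λ G] [Module.Finite Λ G] :
    IsGorensteinProjective Λ G ↔
      ∃ (P : ℕ → ModuleCat.{0} Λ) (f : G →ₗ[Λ] P 0) (δ : ∀ k, P k ⟶ P (k + 1)),
        (∀ k, Module.Finite Λ (P k)) ∧
        (∀ k, Module.Projective Λ (P k)) ∧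
        Function.Injective f ∧
        LinearMap.range f = LinearMap.ker (δ 0).hom ∧
        (∀ k, LinearMap.range (δ k).hom = LinearMap.ker (δ (k + 1)).hom) :=
  gorensteinProjective_iff_coresolution_general K Λ d hleft G
end
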